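/- arXiv:1710.06208 — 2 statements merged into one kernel-verified Lean document; each statement's English description precedes it below -/
import Mathlib

section
/- Let g₁, g₂ be positive integers with g₂/2 < g₁ < g₂ and let S be a numerical semigroup with E(S) = {g₁, g₂}. Then there exist irreducible numerical semigroups S₁ with Frobenius number g₁ and S₂ with Frobenius number g₂ such that g₁ ∈ S₂ and S = S₁ ∩ S₂. -/
/-- A numerical semigroup: subset of ℕ closed under addition, containing 0, cofinite. -/
def IsNumericalSemigroup (S : Set ℕ) : Prop :=
  0 ∈ S ∧ (∀ a b, a ∈ S → b ∈ S → a + b ∈ S) ∧ Sᶜ.Finite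

/-- The set of special gaps E(S). -/
def specialGaps (S : Set ℕ) : Set ℕ :=
  {x | x ∉ S ∧ 2 * x ∈ S ∧ ∀ s ∈ S, s ≠ 0 → x + s ∈ S}

/-- `F` is the Frobenius number of `S`: the greatest natural number not in `S`. -/
def IsFrobenius (S : Set ℕ) (F : ℕ) : Prop :=
  F ∉ S ∧ ∀ m : ℕ, m ∉ S → m ≤ F

/-- Irreducible numerical semigroup. -/
def IsIrreducibleNS (S : Set ℕ) : Prop :=
  IsNumericalSemigroup S ∧ ∀ S₁ S₂ : Set ℕ, IsNumericalSemigroup S₁ →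
    IsNumericalSemigroup S₂ → S = S₁ ∩ S₂ → S = S₁ ∨ S = S₂

/-- Atomic numerical semigroup. -/
def IsAtomicNS (S : Set ℕ) : Prop :=
  IsNumericalSemigroup S ∧ ∀ (F : ℕ) (S₁ S₂ : Set ℕ), IsFrobenius S F →
    IsNumericalSemigroup S₁ → IsNumericalSemigroup S₂ →
    IsFrobenius S₁ F → IsFrobenius S₂ F → S = S₁ ∩ S₂ → S = S₁ ∨ S = S₂

/-- Pseudo-Frobenius numbers of `S`, as integers. -/
def pseudoFrob (S : Set ℕ) : Set ℤ :=
  {x | x ∉ (fun n : ℕ => (n : ℤ)) '' S ∧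
    ∀ s ∈ S, s ≠ 0 → x + (s : ℤ) ∈ (fun n : ℕ => (n : ℤ)) '' S}

/-- The semigroup C(F): 0 together with all naturals greater than F/2, except F. -/
def NSC (F : ℕ) : Set ℕ := insert 0 ({n : ℕ | F / 2 < n} \ {F})

/-- `x` is a minimal generator of `S`. -/
def IsMinGen (S : Set ℕ) (x : ℕ) : Prop :=
  x ∈ S ∧ x ≠ 0 ∧ ∀ a b, a ∈ S → b ∈ S → a ≠ 0 → b ≠ 0 → a + b ≠ x

/-! A maximality argument shows that above every gap `b` of a numerical semigroup `S` with
`2 * b ∈ S` lies a special gap `g` with `g - b ∈ S`, and that a semigroup containing `T` properly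
contains a special gap of `T`; so a semigroup whose only special gap is its Frobenius number is
irreducible. Adjoining to `S` the gaps `n` with `F / 2 < n < F` and `F - n ∉ S` yields such an
irreducible semigroup with Frobenius number `F`. Take `S₂` this extension of `S` at `g₂` and
`S₁` the extension of `S ∪ (g₁, ∞)` at `g₁`. An element `n ∉ S` of `S₂` has `2 * n > g₂` and
`g₂ - n ∉ S`, so the special gap above it is `g₁`; then `g₁ - n ∈ S`, which keeps `n` out of `S₁`. -/

def irreducibleExtension (S : Set ℕ) (F : ℕ) : Set ℕ :=
  S ∪ {n | F < 2 * n ∧ n < F ∧ F - n ∉ S}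

theorem IsFrobenius.mem_specialGaps {S : Set ℕ} {F : ℕ} (h0 : 0 ∈ S) (hF : IsFrobenius S F) :
    F ∈ specialGaps S := by
  have hF0 : F ≠ 0 := by rintro rfl; exact hF.1 h0
  refine ⟨hF.1, ?_, fun s _ hs0 => ?_⟩
  · by_contra h
    have := hF.2 _ h
    omega
  · by_contra h
    have := hF.2 _ h
    omega

namespace IsNumericalSemigroup

variable {S T : Set ℕ}

theorem exists_isFrobenius (hS : IsNumericalSemigroup S) {n : ℕ} (hn : n ∉ S) :
    ∃ F, IsFrobenius S F := by
  obtain ⟨F, hF, hmax⟩ := Set.exists_max_image Sᶜ id hS.2.2 ⟨n, hn⟩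
  exact ⟨F, hF, hmax⟩

theorem exists_mem_specialGaps_sub_mem (hS : IsNumericalSemigroup S) {b : ℕ} (hb : b ∉ S)
    (h2b : 2 * b ∈ S) : ∃ g ∈ specialGaps S, b ≤ g ∧ g - b ∈ S := by
  have hfin : {x | x ∉ S ∧ b ≤ x ∧ x - b ∈ S}.Finite := hS.2.2.subset fun x hx => hx.1
  obtain ⟨g, ⟨hg, hbg, hgb⟩, hmax⟩ :=
    Set.exists_max_image _ id hfin ⟨b, hb, le_rfl, by simpa using hS.1⟩
  refine ⟨g, ⟨hg, ?_, fun s hs hs0 => ?_⟩, hbg, hgb⟩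
  · have := hS.2.1 _ _ h2b (hS.2.1 _ _ hgb hgb)
    rwa [show 2 * b + (g - b + (g - b)) = 2 * g by omega] at this
  · by_contra h
    have hgs : g + s - b ∈ S := by
      rw [show g + s - b = g - b + s by omega]
      exact hS.2.1 _ _ hgb hs
    have := hmax (g + s) ⟨h, by omega, hgs⟩
    simp only [id] at this
    omega

theorem exists_mem_specialGaps_of_ssubset (hT : IsNumericalSemigroup T)
    {C : Set ℕ} (hC : IsNumericalSemigroup C) (h : T ⊂ C) : ∃ x ∈ specialGaps T, x ∈ C := by
  obtain ⟨x, ⟨hxC, hxT⟩, hmax⟩ :=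
    Set.exists_max_image (C \ T) id (hT.2.2.subset fun x hx => hx.2) (Set.nonempty_of_ssubset h)
  have hx0 : x ≠ 0 := by rintro rfl; exact hxT hT.1
  refine ⟨x, ⟨hxT, ?_, fun s hs hs0 => ?_⟩, hxC⟩
  · by_contra h2
    have := hmax (2 * x) ⟨by simpa [two_mul] using hC.2.1 _ _ hxC hxC, h2⟩
    simp only [id] at this
    omega
  · by_contra h'
    have := hmax (x + s) ⟨hC.2.1 _ _ hxC (h.subset hs), h'⟩
    simp only [id] at this
    omega

theorem isIrreducibleNS_of_specialGaps_subset (hT : IsNumericalSemigroup T) {F : ℕ}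
    (hF : F ∉ T) (h : specialGaps T ⊆ {F}) : IsIrreducibleNS T := by
  refine ⟨hT, fun A B hA hB hAB => ?_⟩
  have mem_of_ne : ∀ C, IsNumericalSemigroup C → T ⊆ C → T ≠ C → F ∈ C := by
    intro C hC hTC hne
    obtain ⟨x, hx, hxC⟩ := hT.exists_mem_specialGaps_of_ssubset hC (hTC.ssubset_of_ne hne)
    rwa [Set.mem_singleton_iff.mp (h hx)] at hxC
  by_contra! hne
  rw [hAB] at hF
  exact hF ⟨mem_of_ne A hA (hAB ▸ Set.inter_subset_left) hne.1,
    mem_of_ne B hB (hAB ▸ Set.inter_subset_right) hne.2⟩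

theorem union_Ioi (hS : IsNumericalSemigroup S) (g : ℕ) :
    IsNumericalSemigroup (S ∪ Set.Ioi g) := by
  refine ⟨Or.inl hS.1, ?_, (Set.finite_Iic g).subset fun _ hn => Set.mem_Iic.mpr (not_lt.mp fun h => hn (Or.inr h))⟩
  rintro a b (ha | ha) (hb | hb)
  · exact Or.inl (hS.2.1 a b ha hb)
  all_goals
    right
    simp only [Set.mem_Ioi] at *
    omega

end IsNumericalSemigroup

theorem isFrobenius_union_Ioi {S : Set ℕ} {g : ℕ} (hg : g ∉ S) :
    IsFrobenius (S ∪ Set.Ioi g) g :=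
  ⟨by simp [hg], fun _ hm => not_lt.mp fun h => hm (Or.inr h)⟩

section irreducibleExtension

variable {S : Set ℕ} {F : ℕ}

theorem isFrobenius_irreducibleExtension (hF : IsFrobenius S F) :
    IsFrobenius (irreducibleExtension S F) F :=
  ⟨by rintro (h | ⟨-, h, -⟩); exacts [hF.1 h, lt_irrefl F h],
    fun m hm => hF.2 m fun h => hm (Or.inl h)⟩

theorem add_mem_irreducibleExtension (hS : IsNumericalSemigroup S) (hF : IsFrobenius S F)
    {a b : ℕ} (ha : a ∈ S) (hb : F < 2 * b ∧ b < F ∧ F - b ∉ S) :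
    a + b ∈ irreducibleExtension S F := by
  obtain ⟨hb₁, hb₂, hb₃⟩ := hb
  by_cases hab : a + b ∈ S
  · exact Or.inl hab
  have habF : a + b ≠ F := by
    rintro rfl
    exact hb₃ (by rwa [Nat.add_sub_cancel])
  refine Or.inr ⟨by omega, lt_of_le_of_ne (hF.2 _ hab) habF, fun h => hb₃ ?_⟩
  rw [show F - b = F - (a + b) + a by have := hF.2 _ hab; omega]
  exact hS.2.1 _ _ h ha

theorem isNumericalSemigroup_irreducibleExtension (hS : IsNumericalSemigroup S)
    (hF : IsFrobenius S F) : IsNumericalSemigroup (irreducibleExtension S F) := by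
  refine ⟨Or.inl hS.1, ?_, hS.2.2.subset fun n hn h => hn (Or.inl h)⟩
  rintro a b (ha | ha) (hb | hb)
  · exact Or.inl (hS.2.1 a b ha hb)
  · exact add_mem_irreducibleExtension hS hF ha hb
  · rw [add_comm]
    exact add_mem_irreducibleExtension hS hF hb ha
  · have := ha.1
    have := hb.1
    exact Or.inl (by_contra fun h => by have := hF.2 _ h; omega)

theorem specialGaps_irreducibleExtension_subset (hS : IsNumericalSemigroup S)
    (hF : IsFrobenius S F) : specialGaps (irreducibleExtension S F) ⊆ {F} := by
  rintro x ⟨hx, h2x, hxs⟩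
  by_contra hxF
  have hxS : x ∉ S := fun h => hx (Or.inl h)
  have hxlt : x < F := lt_of_le_of_ne (hF.2 x hxS) hxF
  have hx0 : x ≠ 0 := by rintro rfl; exact hxS hS.1
  -- `F - x` is in the extension either way, and then so is `x + (F - x) = F`
  have hFx : F - x ∈ irreducibleExtension S F := by
    by_cases hFxS : F - x ∈ S
    · exact Or.inl hFxS
    have h2xF : 2 * x ≠ F := fun h => (isFrobenius_irreducibleExtension hF).1 (h ▸ h2x)
    have h2xle : 2 * x ≤ F := not_lt.mp fun h => hx (Or.inr ⟨h, hxlt, hFxS⟩)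
    exact Or.inr ⟨by omega, by omega, by rwa [Nat.sub_sub_self hxlt.le]⟩
  have := hxs _ hFx (by omega)
  rw [Nat.add_sub_cancel' hxlt.le] at this
  exact (isFrobenius_irreducibleExtension hF).1 this

theorem isIrreducibleNS_irreducibleExtension (hS : IsNumericalSemigroup S)
    (hF : IsFrobenius S F) : IsIrreducibleNS (irreducibleExtension S F) :=
  (isNumericalSemigroup_irreducibleExtension hS hF).isIrreducibleNS_of_specialGaps_subset
    (isFrobenius_irreducibleExtension hF).1 (specialGaps_irreducibleExtension_subset hS hF)

theorem irreducibleExtension_union_Ioi_inter_irreducibleExtension {g₁ g₂ : ℕ}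
    (hS : IsNumericalSemigroup S) (hE : specialGaps S ⊆ {g₁, g₂}) (hF : IsFrobenius S g₂) :
    irreducibleExtension (S ∪ Set.Ioi g₁) g₁ ∩ irreducibleExtension S g₂ = S := by
  refine Set.Subset.antisymm ?_ fun n hn => ⟨Or.inl (Or.inl hn), Or.inl hn⟩
  rintro n ⟨hn₁, hn₂ | ⟨hn₂, -, hg₂n⟩⟩
  · exact hn₂
  by_contra hnS
  have h2n : 2 * n ∈ S := by_contra fun h => by have := hF.2 _ h; omega
  obtain ⟨g, hg, hng, hgn⟩ := hS.exists_mem_specialGaps_sub_mem hnS h2n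
  rcases hE hg with rfl | rfl
  · rcases hn₁ with (h | h) | ⟨-, -, h⟩
    · exact hnS h
    · exact absurd hng (not_le.mpr h)
    · exact h (Or.inl hgn)
  · exact hg₂n hgn

end irreducibleExtension

theorem stmt13_general (g₁ g₂ : ℕ) (h1 : g₂ < 2 * g₁) (h2 : g₁ < g₂)
    (S : Set ℕ) (hS : IsNumericalSemigroup S) (hE : specialGaps S = {g₁, g₂}) :
    ∃ S₁ S₂ : Set ℕ, IsIrreducibleNS S₁ ∧ IsFrobenius S₁ g₁ ∧
      IsIrreducibleNS S₂ ∧ IsFrobenius S₂ g₂ ∧ g₁ ∈ S₂ ∧ S = S₁ ∩ S₂ := by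
  have hg₁ : g₁ ∈ specialGaps S := hE ▸ Set.mem_insert _ _
  have hg₂ : g₂ ∈ specialGaps S := hE ▸ Set.mem_insert_of_mem _ rfl
  have hF : IsFrobenius S g₂ := by
    obtain ⟨F, hF⟩ := hS.exists_isFrobenius hg₂.1
    have hFE : F ∈ specialGaps S := hF.mem_specialGaps hS.1
    have hg₂F := hF.2 g₂ hg₂.1
    rw [hE] at hFE
    rcases hFE with rfl | rfl
    · omega
    · exact hF
  have hg₁S₂ : g₁ ∈ irreducibleExtension S g₂ := by
    refine Or.inr ⟨h1, h2, fun h => hg₂.1 ?_⟩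
    simpa [Nat.add_sub_cancel' h2.le] using hg₁.2.2 _ h (by omega)
  have hF₁ := isFrobenius_union_Ioi hg₁.1
  exact ⟨_, _, isIrreducibleNS_irreducibleExtension (hS.union_Ioi g₁) hF₁,
    isFrobenius_irreducibleExtension hF₁, isIrreducibleNS_irreducibleExtension hS hF,
    isFrobenius_irreducibleExtension hF, hg₁S₂,
    (irreducibleExtension_union_Ioi_inter_irreducibleExtension hS hE.subset hF).symm⟩

theorem stmt13 (g₁ g₂ : ℕ) (h0 : 0 < g₁) (h1 : g₂ < 2 * g₁) (h2 : g₁ < g₂)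
    (S : Set ℕ) (hS : IsNumericalSemigroup S) (hE : specialGaps S = {g₁, g₂}) :
    ∃ S₁ S₂ : Set ℕ, IsIrreducibleNS S₁ ∧ IsFrobenius S₁ g₁ ∧
      IsIrreducibleNS S₂ ∧ IsFrobenius S₂ g₂ ∧ g₁ ∈ S₂ ∧ S = S₁ ∩ S₂ :=
  stmt13_general g₁ g₂ h1 h2 S hS hE
end

section
/- Let S be an irreducible numerical semigroup with Frobenius number F and let x be a minimal generator of S satisfying F/2 < x < F, 2x − F ∉ S, 3x ≠ 2F, and 4x ≠ 3F. Then (S \ {x}) ∪ {F − x} is an irreducible numerical semigroup with Frobenius number F. -/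
/-!
An irreducible numerical semigroup `S` with Frobenius number `F` is characterised by the
symmetry `n ∉ S, 2n ≠ F → F - n ∈ S`. Removing the minimal generator `x` leaves a numerical
semigroup to which the gap `F - x` can be added: `2(F - x)` and `F - x + a` (for `0 ≠ a ∈ S`,
`a ≠ x`) lie in `S \ {x}` by the symmetry of `S`, the minimality of `x` and the conditions on `x`.
The new semigroup still has Frobenius number `F` and inherits the symmetry, with the roles of
`x` and `F - x` exchanged.
-/

namespace IsFrobenius

variable {S : Set ℕ} {F : ℕ}

theorem mem_of_lt (hF : IsFrobenius S F) {n : ℕ} (h : F < n) : n ∈ S := by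
  by_contra hn
  exact absurd (hF.2 n hn) (by omega)

theorem pos (hF : IsFrobenius S F) (h0 : 0 ∈ S) : 0 < F :=
  Nat.pos_of_ne_zero fun hF0 => hF.1 (hF0 ▸ h0)

theorem mem_specialGaps_s18 (hF : IsFrobenius S F) (h0 : 0 ∈ S) : F ∈ specialGaps S :=
  ⟨hF.1, hF.mem_of_lt (by have := hF.pos h0; omega),
    fun _ _ hs0 => hF.mem_of_lt (by omega)⟩

theorem insert_diff_singleton (hF : IsFrobenius S F) {x y : ℕ} (hxF : x < F) (hyF : y ≠ F) :
    IsFrobenius (insert y (S \ {x})) F := by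
  refine ⟨by simp [hF.1, hyF.symm], fun m hm => ?_⟩
  simp only [Set.mem_insert_iff, Set.mem_sdiff, Set.mem_singleton_iff, not_or, not_and,
    not_not] at hm
  by_cases hmS : m ∈ S
  · have := hm.2 hmS
    omega
  · exact hF.2 m hmS

end IsFrobenius

namespace IsNumericalSemigroup

variable {S : Set ℕ}

theorem insert_of_add_mem (hS : IsNumericalSemigroup S) {g : ℕ} (h2g : 2 * g ∈ S)
    (hgs : ∀ s ∈ S, s ≠ 0 → g + s ∈ S) : IsNumericalSemigroup (insert g S) := by
  have hadd_g : ∀ s ∈ S, g + s ∈ insert g S := fun s hs => by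
    rcases eq_or_ne s 0 with rfl | hs0
    · exact Set.mem_insert g S
    · exact Set.mem_insert_of_mem g (hgs s hs hs0)
  refine ⟨Set.mem_insert_of_mem g hS.1, ?_, hS.2.2.subset (Set.compl_subset_compl.2
    (Set.subset_insert g S))⟩
  rintro a b (rfl | ha) (rfl | hb)
  · exact Set.mem_insert_of_mem _ (by rw [← two_mul]; exact h2g)
  · exact hadd_g b hb
  · exact add_comm b a ▸ hadd_g a ha
  · exact Set.mem_insert_of_mem g (hS.2.1 a b ha hb)

theorem diff_singleton (hS : IsNumericalSemigroup S) {x : ℕ} (hx : IsMinGen S x) :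
    IsNumericalSemigroup (S \ {x}) := by
  obtain ⟨-, hx0, hxmin⟩ := hx
  refine ⟨⟨hS.1, Ne.symm hx0⟩, ?_, ?_⟩
  · rintro a b ⟨ha, hax⟩ ⟨hb, hbx⟩
    refine ⟨hS.2.1 a b ha hb, ?_⟩
    rcases eq_or_ne a 0 with rfl | ha0
    · simpa using hbx
    rcases eq_or_ne b 0 with rfl | hb0
    · simpa using hax
    exact hxmin a b ha hb ha0 hb0
  · rw [Set.compl_sdiff]
    exact (Set.finite_singleton x).union hS.2.2

end IsNumericalSemigroup

theorem IsIrreducibleNS.eq_of_mem_specialGaps {S : Set ℕ} (hS : IsIrreducibleNS S) {F : ℕ}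
    (hF : IsFrobenius S F) {g : ℕ} (hg : g ∈ specialGaps S) : g = F := by
  by_contra hgF
  have hFgap := hF.mem_specialGaps_s18 hS.1.1
  have hinter : S = insert g S ∩ insert F S := by
    ext z
    simp only [Set.mem_inter_iff, Set.mem_insert_iff]
    constructor
    · exact fun hz => ⟨Or.inr hz, Or.inr hz⟩
    · rintro ⟨rfl | hz, rfl | hz'⟩
      exacts [absurd rfl hgF, hz', hz, hz]
  rcases hS.2 _ _ (hS.1.insert_of_add_mem hg.2.1 hg.2.2)
    (hS.1.insert_of_add_mem hFgap.2.1 hFgap.2.2) hinter with h | h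
  · exact hg.1 (h ▸ Set.mem_insert g S)
  · exact hF.1 (h ▸ Set.mem_insert F S)

theorem IsNumericalSemigroup.mem_specialGaps_of_forall_gt {S : Set ℕ}
    (hS : IsNumericalSemigroup S) {F : ℕ} (hF : IsFrobenius S F) {h : ℕ} (hhS : h ∉ S)
    (hFh : F - h ∉ S) (h2h : 2 * h ≠ F)
    (hgt : ∀ m, h < m → m ∉ S → 2 * m ≠ F → F - m ∈ S) : h ∈ specialGaps S := by
  have hhF := hF.2 h hhS
  have hh0 : h ≠ 0 := fun h0 => hhS (h0 ▸ hS.1)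
  have hadd_mem : ∀ s ∈ S, s ≠ 0 → h + s ∈ S := by
    intro s hs hs0
    by_contra hhs
    have hhsF := hF.2 _ hhs
    by_cases h2hs : 2 * (h + s) = F
    · -- `h + 2s = F - h` is then a gap above `h` whose mirror image is `h` itself
      have hh2s : h + 2 * s ∉ S := fun hm => hFh (by rwa [show F - h = h + 2 * s by omega])
      have := hgt (h + 2 * s) (by omega) hh2s (by omega)
      exact hhS (by rwa [show h = F - (h + 2 * s) by omega])
    · have := hS.2.1 _ _ (hgt (h + s) (by omega) hhs h2hs) hs
      exact hFh (by rwa [show F - (h + s) + s = F - h by omega] at this)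
  refine ⟨hhS, ?_, hadd_mem⟩
  by_contra h2hS
  have h2hF := hF.2 _ h2hS
  by_cases h4h : 2 * (2 * h) = F
  · have h3h : 3 * h ∉ S := fun hm => hFh (by rwa [show F - h = 3 * h by omega])
    have := hgt (3 * h) (by omega) h3h (by omega)
    exact hhS (by rwa [show h = F - 3 * h by omega])
  · have := hadd_mem _ (hgt (2 * h) (by omega) h2hS h4h) (by omega)
    exact hFh (by rwa [show h + (F - 2 * h) = F - h by omega] at this)

/-- A largest gap `h` violating this would be a special gap other than `F`, and then
`S = (S ∪ {h}) ∩ (S ∪ {F})`. -/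
theorem IsIrreducibleNS.sub_mem_of_notMem {S : Set ℕ} (hS : IsIrreducibleNS S) {F : ℕ}
    (hF : IsFrobenius S F) {n : ℕ} (hn : n ∉ S) (h2n : 2 * n ≠ F) : F - n ∈ S := by
  by_contra hFn
  obtain ⟨h, ⟨hhS, hFh, h2h⟩, hmax⟩ :=
    Set.exists_max_image {m | m ∉ S ∧ F - m ∉ S ∧ 2 * m ≠ F} id
      (hS.1.2.2.subset fun _ hm => hm.1) ⟨n, hn, hFn, h2n⟩
  have hgap : h ∈ specialGaps S :=
    hS.1.mem_specialGaps_of_forall_gt hF hhS hFh h2h fun m hhm hmS h2m =>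
      by_contra fun hFm => absurd (hmax m ⟨hmS, hFm, h2m⟩) (by simpa using hhm)
  obtain rfl := hS.eq_of_mem_specialGaps hF hgap
  exact hFh (by simpa using hS.1.1)

theorem isIrreducibleNS_of_sub_mem {S : Set ℕ} (hS : IsNumericalSemigroup S) {F : ℕ}
    (hF : IsFrobenius S F) (hsymm : ∀ n, n ∉ S → 2 * n ≠ F → F - n ∈ S) :
    IsIrreducibleNS S := by
  have heq_of_notMem : ∀ T, IsNumericalSemigroup T → S ⊆ T → F ∉ T → S = T := by
    refine fun T hT hST hFT => hST.antisymm fun a haT => by_contra fun haS => ?_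
    have haF := hF.2 a haS
    by_cases h2a : 2 * a = F
    · exact hFT (by rw [← h2a, two_mul]; exact hT.2.1 a a haT haT)
    · have := hT.2.1 a _ haT (hST (hsymm a haS h2a))
      exact hFT (by rwa [show a + (F - a) = F by omega] at this)
  refine ⟨hS, fun S₁ S₂ hS₁ hS₂ hinter => ?_⟩
  have hsub : S ⊆ S₁ ∧ S ⊆ S₂ := Set.subset_inter_iff.1 hinter.le
  by_cases hF₁ : F ∈ S₁
  · exact Or.inr (heq_of_notMem S₂ hS₂ hsub.2 fun hF₂ => hF.1 (hinter ▸ ⟨hF₁, hF₂⟩))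
  · exact Or.inl (heq_of_notMem S₁ hS₁ hsub.1 hF₁)

theorem IsFrobenius.sub_mem_insert_sub_diff_singleton {S : Set ℕ} {F x : ℕ} (hF : IsFrobenius S F)
    (hxF : x ≤ F) (hsymm : ∀ n, n ∉ S → 2 * n ≠ F → F - n ∈ S) {n : ℕ}
    (hn : n ∉ insert (F - x) (S \ {x})) (h2n : 2 * n ≠ F) :
    F - n ∈ insert (F - x) (S \ {x}) := by
  simp only [Set.mem_insert_iff, Set.mem_sdiff, Set.mem_singleton_iff, not_or, not_and,
    not_not] at hn
  by_cases hnS : n ∈ S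
  · rw [hn.2 hnS]
    exact Set.mem_insert _ _
  · have := hF.2 n hnS
    exact Set.mem_insert_of_mem _ ⟨hsymm n hnS h2n, by simp only [Set.mem_singleton_iff]; omega⟩

namespace IsIrreducibleNS

variable {S : Set ℕ} {F x : ℕ}

theorem two_mul_sub_mem (hS : IsIrreducibleNS S) (hF : IsFrobenius S F) (hxF : x ≤ F)
    (h3 : 2 * x - F ∉ S) (h5 : 4 * x ≠ 3 * F) : 2 * (F - x) ∈ S := by
  by_contra hns
  have := hS.sub_mem_of_notMem hF hns (by omega)
  exact h3 (by rwa [show F - 2 * (F - x) = 2 * x - F by omega] at this)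

theorem sub_add_mem (hS : IsIrreducibleNS S) (hF : IsFrobenius S F) (hx : IsMinGen S x)
    (hxF : x ≤ F) (h3 : 2 * x - F ∉ S) {a : ℕ} (ha : a ∈ S) (ha0 : a ≠ 0) (hax : a ≠ x) :
    F - x + a ∈ S := by
  by_contra hns
  have := hF.2 _ hns
  by_cases h2 : 2 * (F - x + a) = F
  · have h2a : a + a ∈ S := hS.1.2.1 a a ha ha
    exact h3 (by rwa [show 2 * x - F = a + a by omega])
  · have := hS.sub_mem_of_notMem hF hns h2
    exact hx.2.2 (x - a) a (by rwa [show F - (F - x + a) = x - a by omega] at this) ha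
      (by omega) ha0 (by omega)

end IsIrreducibleNS

theorem stmt18_general (S : Set ℕ) (hS : IsIrreducibleNS S) (F : ℕ)
    (hF : IsFrobenius S F) (x : ℕ) (hx : IsMinGen S x)
    (h2 : x < F) (h3 : 2 * x - F ∉ S)
    (h4 : 3 * x ≠ 2 * F) (h5 : 4 * x ≠ 3 * F) :
    IsIrreducibleNS ((S \ {x}) ∪ {F - x}) ∧
    IsFrobenius ((S \ {x}) ∪ {F - x}) F := by
  rw [Set.union_singleton]
  have hNS : IsNumericalSemigroup (insert (F - x) (S \ {x})) := by
    refine (hS.1.diff_singleton hx).insert_of_add_mem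
      ⟨hS.two_mul_sub_mem hF h2.le h3 h5, by simp only [Set.mem_singleton_iff]; omega⟩ ?_
    rintro a ⟨ha, hax⟩ ha0
    refine ⟨hS.sub_add_mem hF hx h2.le h3 ha ha0 hax, fun hx' => h3 ?_⟩
    rwa [show 2 * x - F = a by simp only [Set.mem_singleton_iff] at hx'; omega]
  have hFrob := hF.insert_diff_singleton h2 (show F - x ≠ F by have := hx.2.1; omega)
  refine ⟨isIrreducibleNS_of_sub_mem hNS hFrob fun n hn h2n => ?_, hFrob⟩
  exact hF.sub_mem_insert_sub_diff_singleton h2.le (fun _ => hS.sub_mem_of_notMem hF) hn h2n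

theorem stmt18 (S : Set ℕ) (hS : IsIrreducibleNS S) (F : ℕ)
    (hF : IsFrobenius S F) (x : ℕ) (hx : IsMinGen S x)
    (h1 : F < 2 * x) (h2 : x < F) (h3 : 2 * x - F ∉ S)
    (h4 : 3 * x ≠ 2 * F) (h5 : 4 * x ≠ 3 * F) :
    IsIrreducibleNS ((S \ {x}) ∪ {F - x}) ∧
    IsFrobenius ((S \ {x}) ∪ {F - x}) F :=
  stmt18_general S hS F hF x hx h2 h3 h4 h5
end
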